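/- (Identity of ĥ.) Let (a_1,…,a_n) be a cyclic generalized arithmetic sequence with n ≥ 2, and let m ∈ {1,…,n} be such that a_m > a_{m−1} and a_m > a_{m+1} (indices taken modulo n). Then ĥ(a_1,…,a_{m−1},a_{m+1},…,a_n) = ĥ(a_1,…,a_n), i.e. deleting the local maximum a_m does not change the value of ĥ. -/

import Mathlib

/-!
After a cyclic reindexing of half of its terms, `ĥ` becomes a sum over consecutive pairs,
`ĥ(a) = ∑ᵢ (aᵢ / aᵢ₊₁ + aᵢ₊₁ / aᵢ - 3)`. At a local maximum
the multiplier `c` in `a_{m-1} + a_{m+1} = c a_m` is below `2`, hence `a_m = a_{m-1} + a_{m+1}`.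
With `p = a_{m-1}` and `q = a_{m+1}`, the two pairs `(p, p + q)` and `(p + q, q)` contribute
exactly what the single new pair `(p, q)` does, and all other pairs are unchanged.
-/

/-- `ĥ` of a cyclic sequence of length `n`, given as a function `a : ℤ → ℝ`
(periodic of period `n`, with meaningful values `a 1, …, a n`). -/
noncomputable def hhatCyc (n : ℕ) (a : ℤ → ℝ) : ℝ :=
  ∑ i ∈ Finset.Icc (1 : ℤ) (n : ℤ),
    (((a i + a (i + 2)) / a (i + 1) + (a (i - 1) + a (i + 1)) / a i) / 2 - 3)

open Finset Function

theorem Finset.sum_Icc_comp_add_right {α M : Type*} [AddCommMonoid M] [AddCommMonoid α]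
    [PartialOrder α] [IsOrderedCancelAddMonoid α] [ExistsAddOfLE α] [LocallyFiniteOrder α]
    (f : α → M) (a b c : α) : ∑ x ∈ Icc a b, f (x + c) = ∑ x ∈ Icc (a + c) (b + c), f x := by
  rw [← map_add_right_Icc, sum_map]
  rfl

namespace Function.Periodic

variable {M : Type*} [AddCancelCommMonoid M] {f : ℤ → M} {p : ℕ}

theorem sum_Icc_add_eq (hf : Periodic f p) (k : ℤ) :
    ∑ i ∈ Icc (k + 1) (k + p), f i = ∑ i ∈ Icc 1 (p : ℤ), f i := by
  have step (j : ℤ) :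
      ∑ i ∈ Icc (j + 1 + 1) (j + 1 + p), f i = ∑ i ∈ Icc (j + 1) (j + p), f i := by
    have h₁ := insert_Icc_add_one_left_eq_Icc (a := j + 1) (b := j + 1 + p) (by omega)
    have h₂ := insert_Icc_right_eq_Icc_add_one (a := j + 1) (b := j + p) (by omega)
    rw [add_right_comm j (p : ℤ) 1] at h₂
    have hsum := congrArg (∑ i ∈ ·, f i) (h₁.trans h₂.symm)
    rw [sum_insert (by simp), sum_insert (by simp), hf] at hsum
    exact add_left_cancel hsum
  induction k using Int.induction_on with
  | zero => simp
  | succ k ih => rw [step, ih]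
  | pred k ih => rw [← step, sub_add_cancel]; exact ih

theorem sum_Icc_comp_add (hf : Periodic f p) (k : ℤ) :
    ∑ i ∈ Icc 1 (p : ℤ), f (i + k) = ∑ i ∈ Icc 1 (p : ℤ), f i := by
  rw [sum_Icc_comp_add_right, add_comm 1 k, add_comm (p : ℤ) k, hf.sum_Icc_add_eq]

end Function.Periodic

noncomputable def edgeWeight (u v : ℝ) : ℝ := u / v + v / u - 3

theorem Function.Periodic.edgeWeight_comp {a : ℤ → ℝ} {c : ℤ} (ha : Periodic a c) :
    Periodic (fun i ↦ edgeWeight (a i) (a (i + 1))) c :=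
  fun i ↦ by simp only [add_right_comm i c 1, ha i, ha (i + 1)]

theorem edgeWeight_add_edgeWeight {u v : ℝ} (hu : u ≠ 0) (hv : v ≠ 0) (huv : u + v ≠ 0) :
    edgeWeight u (u + v) + edgeWeight (u + v) v = edgeWeight u v := by
  unfold edgeWeight
  field_simp
  ring

theorem hhatCyc_eq_sum_edgeWeight (p : ℕ) (a : ℤ → ℝ) (ha : Periodic a p) :
    hhatCyc p a = ∑ i ∈ Icc 1 (p : ℤ), edgeWeight (a i) (a (i + 1)) := by
  set r : ℤ → ℝ := fun i ↦ a (i + 1) / a i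
  set s : ℤ → ℝ := fun i ↦ a i / a (i + 1)
  have hr : Periodic r p := fun i ↦ by simp only [r, add_right_comm i (p : ℤ) 1, ha i, ha (i + 1)]
  have hs : Periodic s p := fun i ↦ by simp only [s, add_right_comm i (p : ℤ) 1, ha i, ha (i + 1)]
  have hterm : ∀ i : ℤ, ((a i + a (i + 2)) / a (i + 1) + (a (i - 1) + a (i + 1)) / a i) / 2 - 3
      = edgeWeight (a i) (a (i + 1)) + ((r (i + 1) - r i) + (s (i + -1) - s i)) / 2 := by
    intro i
    simp only [r, s, edgeWeight, ← sub_eq_add_neg, sub_add_cancel, add_assoc, one_add_one_eq_two]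
    ring
  unfold hhatCyc
  rw [sum_congr rfl fun i _ ↦ hterm i, sum_add_distrib, ← sum_div, sum_add_distrib,
    sum_sub_distrib, sum_sub_distrib, hr.sum_Icc_comp_add, hs.sum_Icc_comp_add]
  simp

theorem add_eq_of_eq_pnat_mul_of_lt_of_lt {x y z : ℝ} {c : ℕ+} (hz : 0 < z)
    (h : x + y = c * z) (hx : x < z) (hy : y < z) : x + y = z := by
  have hc : (c : ℝ) < 2 := lt_of_mul_lt_mul_right (by linarith) hz.le
  have hc1 : c = 1 := PNat.eq_one_of_lt_two (by exact_mod_cast hc)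
  simpa [hc1] using h

theorem apply_eq_apply_add_one_of_deletion {a b : ℤ → ℝ} {N m : ℤ} (ha : Periodic a N)
    (hb : Periodic b (N - 1)) (hb₁ : ∀ i, 1 ≤ i → i < m → b i = a i)
    (hb₂ : ∀ i, m ≤ i → i ≤ N - 1 → b i = a (i + 1)) {j : ℤ} (hmj : m ≤ j)
    (hj : j ≤ m + N - 2) : b j = a (j + 1) := by
  rcases le_or_gt j (N - 1) with h | h
  · exact hb₂ j hmj h
  · calc b j = b (j - (N - 1)) := (hb.sub_eq j).symm
      _ = a (j - (N - 1)) := hb₁ _ (by omega) (by omega)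
      _ = a (j + 1) := by rw [← ha.sub_eq (j + 1)]; ring_nf

theorem sum_edgeWeight_deletion {a b : ℤ → ℝ} {m L : ℤ} (hL : 0 ≤ L)
    (hb : ∀ j, m ≤ j → j ≤ m + L → b j = a (j + 1)) (hbm : b (m - 1) = a (m - 1))
    (hmax : a (m - 1) + a (m + 1) = a m) (h₁ : a (m - 1) ≠ 0) (h₂ : a (m + 1) ≠ 0)
    (hm : a m ≠ 0) :
    ∑ i ∈ Icc (m - 1) (m + L - 1), edgeWeight (b i) (b (i + 1))
      = ∑ i ∈ Icc (m - 1) (m + L), edgeWeight (a i) (a (i + 1)) := by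
  have hinner : ∑ i ∈ Icc m (m + L - 1), edgeWeight (b i) (b (i + 1))
      = ∑ i ∈ Icc (m + 1) (m + L), edgeWeight (a i) (a (i + 1)) :=
    calc _ = ∑ i ∈ Icc m (m + L - 1), edgeWeight (a (i + 1)) (a (i + 1 + 1)) := by
          refine sum_congr rfl fun i hi ↦ ?_
          rw [mem_Icc] at hi
          rw [hb i (by omega) (by omega), hb (i + 1) (by omega) (by omega)]
      _ = _ := by
          rw [sum_Icc_comp_add_right (fun i ↦ edgeWeight (a i) (a (i + 1))), sub_add_cancel]
  rw [← insert_Icc_add_one_left_eq_Icc (a := m - 1) (b := m + L - 1) (by omega),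
    ← insert_Icc_add_one_left_eq_Icc (a := m - 1) (b := m + L) (by omega),
    ← insert_Icc_add_one_left_eq_Icc (a := m - 1 + 1) (b := m + L) (by omega),
    sum_insert (by simp), sum_insert (by simp), sum_insert (by simp), sub_add_cancel, hinner,
    hbm, hb m le_rfl (by omega), ← edgeWeight_add_edgeWeight h₁ h₂ (by rwa [hmax]), hmax]
  ring

theorem hhat_identity_general (n : ℕ) (hn : 2 ≤ n) (a : ℤ → ℝ) (m : ℤ)
    (hpos : ∀ i, 0 < a i) (hper : ∀ i, a (i + (n : ℤ)) = a i)
    (hgas : ∀ i, ∃ c : ℕ+, a (i - 1) + a (i + 1) = (c : ℝ) * a i)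
    (hmax₁ : a (m - 1) < a m) (hmax₂ : a (m + 1) < a m)
    (b : ℤ → ℝ) (hbper : ∀ i, b (i + ((n : ℤ) - 1)) = b i)
    (hb₁ : ∀ i, 1 ≤ i → i < m → b i = a i)
    (hb₂ : ∀ i, m ≤ i → i ≤ (n : ℤ) - 1 → b i = a (i + 1)) :
    hhatCyc (n - 1) b = hhatCyc n a := by
  obtain ⟨c, hc⟩ := hgas m
  have hmax := add_eq_of_eq_pnat_mul_of_lt_of_lt (hpos m) hc hmax₁ hmax₂
  have hba : ∀ j, m ≤ j → j ≤ m + n - 2 → b j = a (j + 1) :=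
    fun j ↦ apply_eq_apply_add_one_of_deletion hper hbper hb₁ hb₂
  have hbm : b (m - 1) = a (m - 1) := by
    rw [← hbper, ← hper (m - 1), hba _ (by omega) (by omega)]
    ring_nf
  have hcast : ((n - 1 : ℕ) : ℤ) = n - 1 := by omega
  have hbper' : Periodic b ((n - 1 : ℕ) : ℤ) := hcast ▸ hbper
  rw [hhatCyc_eq_sum_edgeWeight _ _ hbper', hhatCyc_eq_sum_edgeWeight _ _ hper,
    ← hbper'.edgeWeight_comp.sum_Icc_add_eq (m - 2),
    ← (show Periodic a (n : ℤ) from hper).edgeWeight_comp.sum_Icc_add_eq (m - 2)]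
  convert sum_edgeWeight_deletion (L := n - 2) (by omega) (fun j h₁ h₂ ↦ hba j h₁ (by omega)) hbm
    hmax (hpos _).ne' (hpos _).ne' (hpos _).ne' using 3 <;> omega

/-- Identity of `ĥ`: deleting a local maximum from a cyclic generalized arithmetic
sequence does not change the value of `ĥ`. Here `a : ℤ → ℝ` is the original cyclic
sequence (periodic of period `n`) and `b : ℤ → ℝ` is the cyclic sequence
(periodic of period `n - 1`) obtained by deleting the local maximum `a m`. -/
theorem hhat_identity (n : ℕ) (hn : 2 ≤ n) (a : ℤ → ℝ) (m : ℤ)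
    (hm1 : 1 ≤ m) (hm2 : m ≤ (n : ℤ))
    (hpos : ∀ i, 0 < a i) (hper : ∀ i, a (i + (n : ℤ)) = a i)
    (hgas : ∀ i, ∃ c : ℕ+, a (i - 1) + a (i + 1) = (c : ℝ) * a i)
    (hmax₁ : a (m - 1) < a m) (hmax₂ : a (m + 1) < a m)
    (b : ℤ → ℝ) (hbpos : ∀ i, 0 < b i) (hbper : ∀ i, b (i + ((n : ℤ) - 1)) = b i)
    (hb₁ : ∀ i, 1 ≤ i → i < m → b i = a i)
    (hb₂ : ∀ i, m ≤ i → i ≤ (n : ℤ) - 1 → b i = a (i + 1)) :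
    hhatCyc (n - 1) b = hhatCyc n a :=
  hhat_identity_general n hn a m hpos hper hgas hmax₁ hmax₂ b hbper hb₁ hb₂
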